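/- arXiv:2604.18588 — 7 statements merged into one kernel-verified Lean document; each statement's English description precedes it below -/
import Mathlib

section
/- SR_6 satisfies the identity σ_n for every n ≥ 1: for any elements a₁, ..., a_{2n+1} of SR_6, the product a₁a₂···a_{2n+1} is less than or equal to the sum a₁a₂ + a₂a₃ + ⋯ + a_{2n}a_{2n+1} + a_{2n+1}a₁ in the order a ≤ b ⟺ a+b = b. Equivalently, since the left side equals 1 (the top element), there exists an index i (indices modulo 2n+1) with a_i·a_{i+1} = 1, so the sum equals 1. -/
inductive SR6 : Type
  | e1 | e2 | e3 | e4 | e5 | e6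
  deriving DecidableEq

open SR6

/-- Addition of `SR6` (commutative, idempotent, with `e1` as top). -/
def addS : SR6 → SR6 → SR6
  | e2, e2 => e2
  | e2, e5 => e2
  | e5, e2 => e2
  | e3, e3 => e3
  | e4, e4 => e4
  | e4, e6 => e4
  | e6, e4 => e4
  | e5, e5 => e5
  | e6, e6 => e6
  | _, _ => e1

/-- Multiplication of `SR6`. -/
def mulS : SR6 → SR6 → SR6
  | e2, e6 => e3
  | e6, e2 => e3
  | e4, e5 => e3
  | e5, e4 => e3
  | e5, e6 => e3
  | e6, e5 => e3
  | _, _ => e1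
/-- Fold a binary operation over a nonempty tuple of elements of `SR6`. -/
def cfold (op : SR6 → SR6 → SR6) : (k : ℕ) → (Fin (k + 1) → SR6) → SR6
  | 0, a => a 0
  | k + 1, a => op (cfold op k (fun i => a i.castSucc)) (a (Fin.last (k + 1)))

lemma mul_cases (x y : SR6) : mulS x y = e1 ∨ mulS x y = e3 := by
  cases x <;> cases y <;> simp [mulS]

lemma add_e1_right (x : SR6) : addS x e1 = e1 := by cases x <;> rfl

lemma add_e1_left (x : SR6) : addS e1 x = e1 := by cases x <;> rfl

def fpar : SR6 → Bool
  | e4 => true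
  | e6 => true
  | _ => false

lemma mul_e3_flip {x y : SR6} (h : mulS x y = e3) : fpar y = !fpar x := by
  cases x <;> cases y <;> simp_all [mulS, fpar]

lemma fold_add_e1 : ∀ (k : ℕ) (g : Fin (k+1) → SR6),
    (∀ i, g i = e1 ∨ g i = e3) → (∃ i, g i = e1) → cfold addS k g = e1 := by
  intro k
  induction k with
  | zero =>
    intro g _ ⟨i, hi⟩
    rw [Fin.fin_one_eq_zero i] at hi
    exact hi
  | succ k ih =>
    intro g hall ⟨i, hi⟩
    by_cases hl : g (Fin.last (k+1)) = e1
    · show addS _ _ = e1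
      rw [hl, add_e1_right]
    · have hne : i ≠ Fin.last (k+1) := fun h => hl (h ▸ hi)
      obtain ⟨j, rfl⟩ := Fin.exists_castSucc_eq.2 hne
      have h1 : cfold addS k (fun i => g i.castSucc) = e1 :=
        ih _ (fun i => hall i.castSucc) ⟨j, hi⟩
      show addS _ _ = e1
      rw [h1, add_e1_left]

/-- `SR_6` satisfies the identity `σ_n` for every `n ≥ 1`: the product
`a₁a₂⋯a_{2n+1}` is ≤ the cyclic sum `a₁a₂ + a₂a₃ + ⋯ + a_{2n+1}a₁`.
Moreover some cyclic consecutive product `a_i a_{i+1}` equals `1`,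
and the cyclic sum equals `1`. -/
theorem stmt_7 (n : ℕ) (hn : 1 ≤ n) (a : Fin (2 * n + 1) → SR6) :
    addS (cfold mulS (2 * n) a)
        (cfold addS (2 * n) (fun i => mulS (a i) (a (i + 1)))) =
      cfold addS (2 * n) (fun i => mulS (a i) (a (i + 1))) ∧
    (∃ i : Fin (2 * n + 1), mulS (a i) (a (i + 1)) = e1) ∧
    cfold addS (2 * n) (fun i => mulS (a i) (a (i + 1))) = e1 := by
  have hex : ∃ i : Fin (2 * n + 1), mulS (a i) (a (i + 1)) = e1 := by
    by_contra hcon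
    push_neg at hcon
    have h3 : ∀ i : Fin (2 * n + 1), mulS (a i) (a (i + 1)) = e3 := fun i =>
      (mul_cases (a i) (a (i+1))).resolve_left (hcon i)
    have key : ∀ j (hj : j < 2 * n + 1),
        fpar (a ⟨j, hj⟩) = xor j.bodd (fpar (a ⟨0, Nat.succ_pos _⟩)) := by
      intro j
      induction j with
      | zero => intro hj; simp
      | succ j ihj =>
        intro hj
        have hj' : j < 2 * n + 1 := Nat.lt_of_succ_lt hj
        have hstep := mul_e3_flip (h3 ⟨j, hj'⟩)
        have haddone : (⟨j, hj'⟩ : Fin (2 * n + 1)) + 1 = ⟨j + 1, hj⟩ := by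
          apply Fin.ext
          simp [Fin.add_def, Nat.mod_eq_of_lt hj]
        rw [haddone] at hstep
        rw [hstep, ihj hj']
        simp [Nat.bodd_succ, Bool.xor_comm, Bool.xor_assoc]
    have hlast : (2 : ℕ) * n < 2 * n + 1 := Nat.lt_succ_self _
    have hstep := mul_e3_flip (h3 ⟨2 * n, hlast⟩)
    have haddone : (⟨2 * n, hlast⟩ : Fin (2 * n + 1)) + 1 = ⟨0, Nat.succ_pos _⟩ := by
      apply Fin.ext
      simp [Fin.add_def]
    rw [haddone] at hstep
    rw [key (2 * n) hlast] at hstep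
    simp [Nat.bodd_mul] at hstep
  have hsum : cfold addS (2 * n) (fun i => mulS (a i) (a (i + 1))) = e1 :=
    fold_add_e1 _ _ (fun i => mul_cases _ _) hex
  refine ⟨?_, hex, hsum⟩
  rw [hsum, add_e1_right]
end

section
/- The flat commutative semiring S_c(ab) = {a, b, ab, 0} embeds into SR_6: the map sending 0 ↦ 1, ab ↦ 3, a ↦ 5, b ↦ 6 is an injective semiring homomorphism (preserving + and ·). -/
/-- The flat commutative semiring `S_c(ab)` on `{a, b, ab, 0}`. -/
inductive Scab : Type
  | va | vb | vab | z
  deriving DecidableEq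

/-- Flat addition: `u + v = u` if `u = v`, else the top element `0`. -/
def addA : Scab → Scab → Scab := fun u v => if u = v then u else Scab.z

/-- Multiplication: `a · b = ab`, all other products are `0`. -/
def mulA : Scab → Scab → Scab
  | Scab.va, Scab.vb => Scab.vab
  | Scab.vb, Scab.va => Scab.vab
  | _, _ => Scab.z

open SR6

/-- The embedding of `S_c(ab)` into `SR_6`: `0 ↦ 1`, `ab ↦ 3`, `a ↦ 5`, `b ↦ 6`. -/
def emb : Scab → SR6
  | Scab.z => e1
  | Scab.vab => e3
  | Scab.va => e5
  | Scab.vb => e6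

/-- The map `0 ↦ 1, ab ↦ 3, a ↦ 5, b ↦ 6` is an injective semiring
homomorphism from `S_c(ab)` into `SR_6`. -/
theorem stmt_10 :
    Function.Injective emb ∧
    (∀ u v : Scab, emb (addA u v) = addS (emb u) (emb v)) ∧
    (∀ u v : Scab, emb (mulA u v) = mulS (emb u) (emb v)) := by
  refine ⟨fun u v h => ?_, fun u v => ?_, fun u v => ?_⟩ <;> cases u <;> cases v <;> simp_all [emb, addA, mulA, addS, mulS]
end

section
/- SR_6 does not satisfy the inequality x₁x₄ ≤ x₁x₂ + x₂x₃ + x₃x₄: there exist elements a, b, c, d of SR_6 such that ad + (ab + bc + cd) ≠ ab + bc + cd; e.g., a=2, b=6, c=5, d=4 gives ad = 2·4 = 1 and ab + bc + cd = 3 + 3 + 3 = 3, and 1 ≰ 3 since 1 + 3 = 1 ≠ 3. -/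
open SR6

/-- `SR_6` does not satisfy `x₁x₄ ≤ x₁x₂ + x₂x₃ + x₃x₄`: there exist
`a, b, c, d` with `ad + (ab + bc + cd) ≠ ab + bc + cd`; concretely
`a = 2, b = 6, c = 5, d = 4` works. -/
theorem stmt_12 :
    (∃ a b c d : SR6,
      addS (mulS a d) (addS (mulS a b) (addS (mulS b c) (mulS c d))) ≠
        addS (mulS a b) (addS (mulS b c) (mulS c d))) ∧
    addS (mulS e2 e4) (addS (mulS e2 e6) (addS (mulS e6 e5) (mulS e5 e4))) ≠
      addS (mulS e2 e6) (addS (mulS e6 e5) (mulS e5 e4)) := by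
  refine ⟨⟨e2, e6, e5, e4, by decide⟩, by decide⟩
end

section
/- Let S be a commutative ai-semiring satisfying the identities x³ = x², x² = x + xy, and x₁ ≤ x₂x₃x₄ (for all values of the variables). Then S also satisfies y ≤ x² for all x, y ∈ S. -/
/-- If a commutative ai-semiring satisfies `x³ = x²`, `x² = x + xy`, and
`x₁ ≤ x₂x₃x₄`, then it satisfies `y ≤ x²` for all `x, y`. -/
theorem stmt_13 {S : Type*} (add mul : S → S → S)
    (haC : ∀ x y, add x y = add y x)
    (haA : ∀ x y z, add (add x y) z = add x (add y z))
    (haI : ∀ x, add x x = x)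
    (hmC : ∀ x y, mul x y = mul y x)
    (hmA : ∀ x y z, mul (mul x y) z = mul x (mul y z))
    (hd1 : ∀ x y z, mul x (add y z) = add (mul x y) (mul x z))
    (hd2 : ∀ x y z, mul (add x y) z = add (mul x z) (mul y z))
    (h1 : ∀ x, mul (mul x x) x = mul x x)
    (h2 : ∀ x y, mul x x = add x (mul x y))
    (h3 : ∀ x1 x2 x3 x4, add x1 (mul (mul x2 x3) x4) = mul (mul x2 x3) x4) :
    ∀ x y : S, add y (mul x x) = mul x x := by
  intro x y
  have h := h3 y x x x
  rwa [h1] at h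
end

section
/- Let S be a commutative ai-semiring satisfying x³ = x², x² = x + xy, and x₁ ≤ x₂x₃x₄, and suppose a, b ∈ S satisfy a² ≠ ab. Then: ab < a², a < a², b < a², ab ≠ a, ab ≠ b, ab ≠ a + b, a + b ≠ a, and a + b ≠ b. In particular the five elements a², ab, a + b, a, b are pairwise distinct except possibly a² = a + b. -/
/-- Let `S` be a commutative ai-semiring satisfying `x³ = x²`, `x² = x + xy`,
and `x₁ ≤ x₂x₃x₄`, and let `a, b ∈ S` with `a² ≠ ab`. Then `ab < a²`,
`a < a²`, `b < a²`, `ab ≠ a`, `ab ≠ b`, `ab ≠ a + b`, `a + b ≠ a`, and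
`a + b ≠ b` (where `u ≤ v` means `u + v = v` and `u < v` means `u ≤ v`
and `u ≠ v`). -/
theorem stmt_14 {S : Type*} (add mul : S → S → S)
    (haC : ∀ x y, add x y = add y x)
    (haA : ∀ x y z, add (add x y) z = add x (add y z))
    (haI : ∀ x, add x x = x)
    (hmC : ∀ x y, mul x y = mul y x)
    (hmA : ∀ x y z, mul (mul x y) z = mul x (mul y z))
    (hd1 : ∀ x y z, mul x (add y z) = add (mul x y) (mul x z))
    (hd2 : ∀ x y z, mul (add x y) z = add (mul x z) (mul y z))
    (h1 : ∀ x, mul (mul x x) x = mul x x)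
    (h2 : ∀ x y, mul x x = add x (mul x y))
    (h3 : ∀ x1 x2 x3 x4, add x1 (mul (mul x2 x3) x4) = mul (mul x2 x3) x4)
    (a b : S) (hab : mul a a ≠ mul a b) :
    (add (mul a b) (mul a a) = mul a a ∧ mul a b ≠ mul a a) ∧
    (add a (mul a a) = mul a a ∧ a ≠ mul a a) ∧
    (add b (mul a a) = mul a a ∧ b ≠ mul a a) ∧
    mul a b ≠ a ∧ mul a b ≠ b ∧ mul a b ≠ add a b ∧
    add a b ≠ a ∧ add a b ≠ b := by
  have haI2 : ∀ x y, add x (add x y) = add x y := fun x y => by rw [← haA, haI]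
  have key1 : add (mul a b) (mul a a) = mul a a := by
    rw [h2 a b, haC a (mul a b), haI2]
  have key2 : add a (mul a a) = mul a a := by
    rw [h2 a b, haI2]
  have key3 : add b (mul a a) = mul a a := by
    have t := h3 b a a a; rwa [h1] at t
  have key4 : a ≠ mul a a := by
    intro ha
    have t := h3 a a a b
    rw [← ha] at t
    exact hab ((h2 a b).trans t)
  have key5 : b ≠ mul a a := by
    intro hb
    apply hab
    rw [hb, hmC a (mul a a), h1]
  have key6 : mul a b ≠ a := by
    intro h
    apply hab
    rw [h2 a b, h, haI]
  -- a + b = b leads to contradiction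
  have lem : add a b = b → False := by
    intro h
    have t := hd1 a a b
    rw [h] at t
    apply hab
    calc mul a a = add (mul a b) (mul a a) := key1.symm
      _ = add (mul a a) (mul a b) := haC _ _
      _ = mul a b := t.symm
  have key7 : mul a b ≠ b := by
    intro h
    have hbb : mul b b = b := by rw [h2 b a, hmC b a, h, haI]
    have t := h3 a b b a
    rw [hbb, hmC b a, h] at t
    exact lem t
  have key9 : mul a b ≠ add a b := by
    intro h
    apply hab
    calc mul a a = add a (mul a b) := h2 a b
      _ = add a (add a b) := by rw [h]
      _ = add a b := haI2 a b
      _ = mul a b := h.symm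
  have key10 : add a b ≠ a := by
    intro h
    have s1 : mul a b = add (mul a b) (mul b b) := by
      calc mul a b = mul (add a b) b := by rw [h]
        _ = add (mul a b) (mul b b) := hd2 a b b
    have s2 : add (mul b b) (mul a b) = mul b b := by
      rw [h2 b a, hmC b a, haA, haI]
    have e1 : mul a b = mul b b := by
      rw [s1, haC (mul a b) (mul b b)]
      exact s2
    have e2 : mul (mul a b) b = mul a b := by
      rw [e1]; exact h1 b
    have t := h3 a a b b
    rw [e2] at t
    exact hab ((h2 a b).trans t)
  exact ⟨⟨key1, fun h => hab h.symm⟩, ⟨key2, key4⟩, ⟨key3, key5⟩,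
    key6, key7, key9, key10, lem⟩
end

section
/- Let S be a commutative ai-semiring satisfying x³ = x², x² = x + xy, and x₁ ≤ x₂x₃x₄, and let a, b ∈ S with a² ≠ ab. Then the set I = {a², a+b} is closed under addition, absorbs under multiplication by elements of the subsemiring generated by a and b (s·i ∈ I for all s in that subsemiring and i ∈ I), and is an upward-closed set (order filter) in the subsemiring generated by a, b. -/
/-- The subsemiring of `(S, add, mul)` generated by `a` and `b`: the smallest
subset containing `a` and `b` and closed under `add` and `mul`. -/
def genSub {S : Type*} (add mul : S → S → S) (a b : S) : Set S :=
  ⋂₀ {T : Set S | a ∈ T ∧ b ∈ T ∧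
      ∀ x y, x ∈ T → y ∈ T → add x y ∈ T ∧ mul x y ∈ T}

/-- Let `S` be a commutative ai-semiring satisfying `x³ = x²`, `x² = x + xy`,
and `x₁ ≤ x₂x₃x₄`, and `a, b ∈ S` with `a² ≠ ab`. Then `I = {a², a+b}` is
closed under addition, absorbs multiplication by elements of the subsemiring
generated by `a, b`, and is upward closed in that subsemiring. -/
theorem stmt_15 {S : Type*} (add mul : S → S → S)
    (haC : ∀ x y, add x y = add y x)
    (haA : ∀ x y z, add (add x y) z = add x (add y z))
    (haI : ∀ x, add x x = x)
    (hmC : ∀ x y, mul x y = mul y x)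
    (hmA : ∀ x y z, mul (mul x y) z = mul x (mul y z))
    (hd1 : ∀ x y z, mul x (add y z) = add (mul x y) (mul x z))
    (hd2 : ∀ x y z, mul (add x y) z = add (mul x z) (mul y z))
    (h1 : ∀ x, mul (mul x x) x = mul x x)
    (h2 : ∀ x y, mul x x = add x (mul x y))
    (h3 : ∀ x1 x2 x3 x4, add x1 (mul (mul x2 x3) x4) = mul (mul x2 x3) x4)
    (a b : S) (hab : mul a a ≠ mul a b) :
    (∀ u v, u ∈ ({mul a a, add a b} : Set S) → v ∈ ({mul a a, add a b} : Set S) →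
        add u v ∈ ({mul a a, add a b} : Set S)) ∧
    (∀ s ∈ genSub add mul a b, ∀ i ∈ ({mul a a, add a b} : Set S),
        mul s i ∈ ({mul a a, add a b} : Set S)) ∧
    (∀ i ∈ ({mul a a, add a b} : Set S), ∀ s ∈ genSub add mul a b,
        add i s = s → s ∈ ({mul a a, add a b} : Set S)) := by
  -- `mul a a` is the top element
  have tT : ∀ x, add x (mul a a) = mul a a := by
    intro x; have h := h3 x a a a; rwa [h1] at h
  have tT' : ∀ x, add (mul a a) x = mul a a := fun x => (haC _ _).trans (tT x)
  have triple : ∀ x y z, mul (mul x y) z = mul a a := by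
    intro x y z
    have h4 := h3 (mul a a) x y z
    have h5 := (haC _ _).trans (tT (mul (mul x y) z))
    exact h4.symm.trans h5
  have sq : ∀ x, mul x x = mul a a := by
    intro x; have h := h1 x; rw [triple] at h; exact h.symm
  have sA : ∀ x, mul x (mul a a) = mul a a := by
    intro x; rw [← hmA, triple]
  have sA' : ∀ x, mul (mul a a) x = mul a a := fun x => (hmC _ _).trans (sA x)
  have e_aab : add a (mul a b) = mul a a := (h2 a b).symm
  have e_aab' : add (mul a b) a = mul a a := (haC _ _).trans e_aab
  have e_bab : add b (mul a b) = mul a a := by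
    have h := h2 b a; rw [hmC b a, sq b] at h; exact h.symm
  have e_bab' : add (mul a b) b = mul a a := (haC _ _).trans e_bab
  have haLC : ∀ x y z, add x (add y z) = add y (add x z) := by
    intro x y z; rw [← haA, haC x y, haA]
  have haI2 : ∀ x y, add x (add x y) = add x y := by
    intro x y; rw [← haA, haI]
  -- addition table lemmas
  have c_ba : add b a = add a b := haC b a
  have s24 : add b (add a b) = add a b := by rw [haLC, haI]
  have s34 : add (mul a b) (add a b) = mul a a := by
    rw [haC, haA, e_bab, tT]
  have s41 : add (add a b) a = add a b := by rw [haC, haI2]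
  have s42 : add (add a b) b = add a b := by rw [haA, haI]
  have s43 : add (add a b) (mul a b) = mul a a := by rw [haA, e_bab, tT]
  -- multiplication table lemmas
  have c_mba : mul b a = mul a b := hmC b a
  have m13 : mul a (mul a b) = mul a a := by rw [← hmA, triple]
  have m23 : mul b (mul a b) = mul a a := by
    rw [hmC a b, ← hmA, triple]
  have m14 : mul a (add a b) = mul a a := by rw [hd1, tT']
  have m24 : mul b (add a b) = mul a a := by
    rw [hd1, hmC b a, sq b, tT]
  have m41 : mul (add a b) a = mul a a := by rw [hmC, m14]
  have m42 : mul (add a b) b = mul a a := by rw [hmC, m24]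
  have m43 : mul (add a b) (mul a b) = mul a a := by rw [hmC, triple]
  have addI : ∀ u v, u ∈ ({mul a a, add a b} : Set S) →
      v ∈ ({mul a a, add a b} : Set S) → add u v ∈ ({mul a a, add a b} : Set S) := by
    intro u v hu hv
    simp only [Set.mem_insert_iff, Set.mem_singleton_iff] at hu hv ⊢
    rcases hu with rfl | rfl <;> rcases hv with rfl | rfl <;>
      simp [haI, tT, tT']
  refine ⟨addI, ?_, ?_⟩
  · -- absorption
    intro s hs i hi
    have hP : s ∈ {t : S | mul t (add a b) ∈ ({mul a a, add a b} : Set S)} := by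
      apply hs
      refine ⟨?_, ?_, ?_⟩
      · show mul a (add a b) ∈ ({mul a a, add a b} : Set S)
        rw [m14]; exact Set.mem_insert _ _
      · show mul b (add a b) ∈ ({mul a a, add a b} : Set S)
        rw [m24]; exact Set.mem_insert _ _
      · intro x y hx hy
        constructor
        · show mul (add x y) (add a b) ∈ ({mul a a, add a b} : Set S)
          rw [hd2]
          exact addI _ _ hx hy
        · show mul (mul x y) (add a b) ∈ ({mul a a, add a b} : Set S)
          rw [triple]; exact Set.mem_insert _ _
    simp only [Set.mem_insert_iff, Set.mem_singleton_iff] at hi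
    rcases hi with rfl | rfl
    · rw [sA]; exact Set.mem_insert _ _
    · exact hP
  · -- upward closedness
    intro i hi s hs hle
    have hG : s ∈ ({a, b, mul a b, add a b, mul a a} : Set S) := by
      apply hs
      refine ⟨Or.inl rfl, Or.inr (Or.inl rfl), ?_⟩
      intro x y hx hy
      simp only [Set.mem_insert_iff, Set.mem_singleton_iff] at hx hy ⊢
      rcases hx with rfl | rfl | rfl | rfl | rfl <;>
        rcases hy with rfl | rfl | rfl | rfl | rfl <;>
          refine ⟨?_, ?_⟩ <;>
            simp only [haI, e_aab, e_aab', e_bab, e_bab', tT, tT', haI2,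
              c_ba, s24, s34, s41, s42, s43, triple, sq, sA, sA',
              c_mba, m13, m23, m14, m24, m41, m42, m43] <;>
            simp
    simp only [Set.mem_insert_iff, Set.mem_singleton_iff] at hi hG ⊢
    rcases hi with rfl | rfl
    · left
      exact hle.symm.trans ((haC _ _).trans (tT s))
    · rcases hG with rfl | rfl | rfl | rfl | rfl
      · right
        exact hle.symm.trans s41
      · right
        exact hle.symm.trans s42
      · exfalso
        exact hab (s43.symm.trans hle)
      · right; rfl
      · left; rfl
end

section
/- Let S be a commutative ai-semiring satisfying x³ = x², x² = x + xy, and x₁ ≤ x₂x₃x₄, and let a, b ∈ S with a² ≠ ab. Define the map φ from {a², ab, a+b, a, b} to S_c(ab)' = {0', (ab)', a', b'} by φ(a²) = φ(a+b) = 0', φ(ab) = (ab)', φ(a) = a', φ(b) = b'. Then φ is a surjective map satisfying φ(u + v) = φ(u) + φ(v) and φ(u·v) = φ(u)·φ(v) for all u, v in the subsemiring generated by a and b; hence S_c(ab) is a homomorphic image of a subsemiring of S. -/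
open Classical in
/-- The map `φ` sending `a² ↦ 0`, `a+b ↦ 0`, `ab ↦ ab`, `b ↦ b`, everything else `a`. -/
noncomputable def phiMap {S : Type*} (add mul : S → S → S) (a b : S) : S → Scab :=
  fun s =>
    if s = mul a a then Scab.z
    else if s = add a b then Scab.z
    else if s = mul a b then Scab.vab
    else if s = b then Scab.vb
    else Scab.va

set_option maxHeartbeats 1000000 in
/-- Let `S` be a commutative ai-semiring satisfying `x³ = x²`, `x² = x + xy`,
and `x₁ ≤ x₂x₃x₄`, with `a, b ∈ S` and `a² ≠ ab`. Then there is a map `φ`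
with `φ(a²) = φ(a+b) = 0`, `φ(ab) = ab`, `φ(a) = a`, `φ(b) = b` which is
surjective onto `S_c(ab)` (from the subsemiring generated by `a, b`) and
preserves addition and multiplication on that subsemiring; hence `S_c(ab)`
is a homomorphic image of a subsemiring of `S`. -/
theorem stmt_19 {S : Type*} (add mul : S → S → S)
    (haC : ∀ x y, add x y = add y x)
    (haA : ∀ x y z, add (add x y) z = add x (add y z))
    (haI : ∀ x, add x x = x)
    (hmC : ∀ x y, mul x y = mul y x)
    (hmA : ∀ x y z, mul (mul x y) z = mul x (mul y z))
    (hd1 : ∀ x y z, mul x (add y z) = add (mul x y) (mul x z))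
    (hd2 : ∀ x y z, mul (add x y) z = add (mul x z) (mul y z))
    (h1 : ∀ x, mul (mul x x) x = mul x x)
    (h2 : ∀ x y, mul x x = add x (mul x y))
    (h3 : ∀ x1 x2 x3 x4, add x1 (mul (mul x2 x3) x4) = mul (mul x2 x3) x4)
    (a b : S) (hab : mul a a ≠ mul a b) :
    ∃ φ : S → Scab,
      φ (mul a a) = Scab.z ∧ φ (add a b) = Scab.z ∧
      φ (mul a b) = Scab.vab ∧ φ a = Scab.va ∧ φ b = Scab.vb ∧
      (∀ t : Scab, ∃ s ∈ genSub add mul a b, φ s = t) ∧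
      (∀ u ∈ genSub add mul a b, ∀ v ∈ genSub add mul a b,
        φ (add u v) = addA (φ u) (φ v) ∧ φ (mul u v) = mulA (φ u) (φ v)) := by
  classical
  -- `mul a a` is the top element
  have htop : ∀ x, add x (mul a a) = mul a a := fun x => by
    have h := h3 x a a a
    rwa [h1] at h
  have htop' : ∀ x, add (mul a a) x = mul a a := fun x => by rw [haC]; exact htop x
  have htrip : ∀ x y z, mul (mul x y) z = mul a a := fun x y z => by
    have hA := h3 (mul a a) x y z
    rw [haC] at hA
    exact hA.symm.trans (htop (mul (mul x y) z))
  have hsq : ∀ x, mul x x = mul a a := fun x => by rw [← h1 x]; exact htrip x x x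
  -- multiplication table
  have m_ba : mul b a = mul a b := hmC b a
  have m_bb : mul b b = mul a a := hsq b
  have m_aAB : mul a (mul a b) = mul a a := by rw [← hmA]; exact htrip a a b
  have m_ABa : mul (mul a b) a = mul a a := by rw [hmC]; exact m_aAB
  have m_bAB : mul b (mul a b) = mul a a := by rw [← hmA]; exact htrip b a b
  have m_ABb : mul (mul a b) b = mul a a := htrip a b b
  have m_aP : mul a (add a b) = mul a a := by rw [hd1]; exact htop' _
  have m_Pa : mul (add a b) a = mul a a := by rw [hmC]; exact m_aP
  have m_bP : mul b (add a b) = mul a a := by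
    rw [hd1, hmC b a, hsq b]; exact htop _
  have m_Pb : mul (add a b) b = mul a a := by rw [hmC]; exact m_bP
  have m_PP : mul (add a b) (add a b) = mul a a := hsq _
  have m_PAB : mul (add a b) (mul a b) = mul a a := by rw [hmC]; exact htrip a b _
  have m_ABP : mul (mul a b) (add a b) = mul a a := htrip a b _
  have m_ABAB : mul (mul a b) (mul a b) = mul a a := hsq _
  have m_xT : ∀ x, mul x (mul a a) = mul a a := fun x => by rw [hmC]; exact htrip a a x
  have m_Tx : ∀ x, mul (mul a a) x = mul a a := fun x => htrip a a x
  -- addition table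
  have s_ba : add b a = add a b := haC b a
  have s_aAB : add a (mul a b) = mul a a := (h2 a b).symm
  have s_ABa : add (mul a b) a = mul a a := by rw [haC]; exact s_aAB
  have s_bAB : add b (mul a b) = mul a a := by rw [← hmC b a, ← h2 b a]; exact hsq b
  have s_ABb : add (mul a b) b = mul a a := by rw [haC]; exact s_bAB
  have s_aP : add a (add a b) = add a b := by rw [← haA, haI]
  have s_Pa : add (add a b) a = add a b := by rw [haC]; exact s_aP
  have s_bP : add b (add a b) = add a b := by rw [haC a b, ← haA, haI]
  have s_Pb : add (add a b) b = add a b := by rw [haC]; exact s_bP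
  have s_ABP : add (mul a b) (add a b) = mul a a := by
    rw [← haA, haC (mul a b) a, ← h2 a b]; exact htop' b
  have s_PAB : add (add a b) (mul a b) = mul a a := by rw [haC]; exact s_ABP
  -- distinctness
  have ha_b : a ≠ b := fun h => hab (by rw [← h])
  have ha_AB : a ≠ mul a b := fun h => hab (by rw [h2 a b, ← h, haI])
  have hb_AB : b ≠ mul a b := fun h =>
    hab (by rw [← hsq b, h2 b a, hmC b a, ← h, haI])
  have ha_T : a ≠ mul a a := fun h =>
    hab (by nth_rewrite 3 [h]; exact (htrip a a b).symm)
  have hb_T : b ≠ mul a a := fun h =>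
    hab (by rw [h, hmC a (mul a a)]; exact (htrip a a a).symm)
  have hAB_T : mul a b ≠ mul a a := fun h => hab h.symm
  have hP_a : add a b ≠ a := fun h =>
    hab (by nth_rewrite 3 [← h]; rw [hd2, hsq b]; exact (htop _).symm)
  have hP_b : add a b ≠ b := fun h =>
    hab (by rw [← h, hd1]; exact (htop' _).symm)
  have hP_AB : add a b ≠ mul a b := fun h => by
    have h5 := s_ABP
    rw [← h, haI] at h5
    exact hab (h5.symm.trans h)
  -- values of φ
  set φ := phiMap add mul a b with hφdef
  have hφT : φ (mul a a) = Scab.z := by rw [hφdef, phiMap, if_pos rfl]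
  have hφP : φ (add a b) = Scab.z := by
    rw [hφdef, phiMap]
    split_ifs with h1' h2' <;> simp_all
  have hφAB : φ (mul a b) = Scab.vab := by
    rw [hφdef, phiMap, if_neg hAB_T, if_neg (Ne.symm hP_AB), if_pos rfl]
  have hφb : φ b = Scab.vb := by
    rw [hφdef, phiMap, if_neg hb_T, if_neg (Ne.symm hP_b), if_neg hb_AB, if_pos rfl]
  have hφa : φ a = Scab.va := by
    rw [hφdef, phiMap, if_neg ha_T, if_neg (Ne.symm hP_a), if_neg ha_AB, if_neg ha_b]
  -- the generated subsemiring is contained in {a, b, ab, a+b, a²}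
  have hPmem : ({a, b, mul a b, add a b, mul a a} : Set S) ∈
      {T : Set S | a ∈ T ∧ b ∈ T ∧
        ∀ x y, x ∈ T → y ∈ T → add x y ∈ T ∧ mul x y ∈ T} := by
    refine ⟨by simp, by simp, ?_⟩
    intro x y hx hy
    simp only [Set.mem_insert_iff, Set.mem_singleton_iff] at hx hy ⊢
    rcases hx with rfl | rfl | rfl | rfl | rfl <;>
      rcases hy with rfl | rfl | rfl | rfl | rfl <;>
      refine ⟨?_, ?_⟩ <;>
      simp only [haI, s_ba, s_aAB, s_ABa, s_bAB, s_ABb, s_aP, s_Pa, s_bP, s_Pb,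
        s_ABP, s_PAB, htop, htop', m_ba, m_bb, m_aAB, m_ABa, m_bAB, m_ABb,
        m_aP, m_Pa, m_bP, m_Pb, m_PP, m_PAB, m_ABP, m_ABAB, m_xT, m_Tx] <;>
      tauto
  have hsubset : ∀ x ∈ genSub add mul a b,
      x = a ∨ x = b ∨ x = mul a b ∨ x = add a b ∨ x = mul a a := by
    intro x hx
    have := Set.mem_sInter.mp hx _ hPmem
    simpa only [Set.mem_insert_iff, Set.mem_singleton_iff] using this
  have ha_gen : a ∈ genSub add mul a b := Set.mem_sInter.mpr fun T hT => hT.1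
  have hb_gen : b ∈ genSub add mul a b := Set.mem_sInter.mpr fun T hT => hT.2.1
  have hAB_gen : mul a b ∈ genSub add mul a b := Set.mem_sInter.mpr fun T hT =>
    (hT.2.2 a b (Set.mem_sInter.mp ha_gen T hT) (Set.mem_sInter.mp hb_gen T hT)).2
  have hT_gen : mul a a ∈ genSub add mul a b := Set.mem_sInter.mpr fun T hT =>
    (hT.2.2 a a (Set.mem_sInter.mp ha_gen T hT) (Set.mem_sInter.mp ha_gen T hT)).2
  refine ⟨φ, hφT, hφP, hφAB, hφa, hφb, ?_, ?_⟩
  · intro t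
    cases t with
    | va => exact ⟨a, ha_gen, hφa⟩
    | vb => exact ⟨b, hb_gen, hφb⟩
    | vab => exact ⟨mul a b, hAB_gen, hφAB⟩
    | z => exact ⟨mul a a, hT_gen, hφT⟩
  · intro u hu v hv
    rcases hsubset u hu with rfl | rfl | rfl | rfl | rfl <;>
      rcases hsubset v hv with rfl | rfl | rfl | rfl | rfl <;>
      refine ⟨?_, ?_⟩ <;>
      simp only [haI, s_ba, s_aAB, s_ABa, s_bAB, s_ABb, s_aP, s_Pa, s_bP, s_Pb,
        s_ABP, s_PAB, htop, htop', m_ba, m_bb, m_aAB, m_ABa, m_bAB, m_ABb,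
        m_aP, m_Pa, m_bP, m_Pb, m_PP, m_PAB, m_ABP, m_ABAB, m_xT, m_Tx,
        hφT, hφP, hφAB, hφb, hφa] <;>
      decide
end
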